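/- arXiv:1601.08168 — 13 statements merged into one kernel-verified Lean document; each statement's English description precedes it below -/
import Mathlib

section
/- If X is a set, M is a family of nonempty subsets of X containing all subsets of cardinality at most 2, and A, B ⊆ X satisfy A \ B ≠ ∅ and B \ A ≠ ∅, then (A ∩ B)⁻_M is a proper subset of A⁻_M ∩ B⁻_M. -/
/-- For `S ⊆ X`, `S⁻_M = {m ∈ M : m ∩ S ≠ ∅}` (as a set of members of `M`). -/
def lminus {X : Type*} (M : Set (Set X)) (A : Set X) : Set (↥M) :=
  {m : ↥M | ((m : Set X) ∩ A).Nonempty}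

theorem stmt_1 {X : Type*} (M : Set (Set X)) (hM : ∀ m ∈ M, m.Nonempty)
    (hFin2 : ∀ s : Set X, s.Nonempty → s.Finite → s.ncard ≤ 2 → s ∈ M)
    (A B : Set X) (hAB : (A \ B).Nonempty) (hBA : (B \ A).Nonempty) :
    lminus M (A ∩ B) ⊂ lminus M A ∩ lminus M B := by
  obtain ⟨a, haA, haB⟩ := hAB
  obtain ⟨b, hbB, hbA⟩ := hBA
  constructor
  · rintro m ⟨x, hxm, hxA, hxB⟩
    exact ⟨⟨x, hxm, hxA⟩, ⟨x, hxm, hxB⟩⟩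
  · intro hsub
    have hmem : ({a, b} : Set X) ∈ M := by
      apply hFin2
      · exact ⟨a, Or.inl rfl⟩
      · exact (Set.finite_singleton a).insert b |>.subset (by simp [Set.pair_comm])
      · exact (Set.ncard_insert_le a {b}).trans (by simp)
    have h1 : (⟨{a, b}, hmem⟩ : ↥M) ∈ lminus M A ∩ lminus M B :=
      ⟨⟨a, Or.inl rfl, haA⟩, ⟨b, Or.inr rfl, hbB⟩⟩
    obtain ⟨x, hxm, hxA, hxB⟩ := hsub h1
    rcases hxm with rfl | rfl
    · exact haB hxB
    · exact hbA hxA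
end

section
/- Let (X,T) be a T₁-space, M = CL(X) the family of nonempty closed subsets of X, O a lower-Vietoris-type topology on M with induced topology T_O = T. Then O equals the lower Vietoris topology on CL(X) if and only if for every F ∈ M, the closure of {F} in (M,O) equals F⁺ = {G ∈ CL(X) : G ⊆ F}. -/
def IsLowerVietorisType {X : Type*} (M : Set (Set X)) (O : TopologicalSpace ↥M) : Prop :=
  O = TopologicalSpace.generateFrom
    {s : Set ↥M | @IsOpen _ O s ∧ ∃ A : Set X, s = lminus M A}

theorem stmt_4 {X : Type*} [T : TopologicalSpace X] [T1Space X]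
    (M : Set (Set X)) (hM : M = {F : Set X | IsClosed F ∧ F.Nonempty})
    (O : TopologicalSpace ↥M) (hO : IsLowerVietorisType M O)
    (hTO : TopologicalSpace.generateFrom {A : Set X | @IsOpen _ O (lminus M A)} = T) :
    O = TopologicalSpace.generateFrom
        {s : Set ↥M | ∃ U : Set X, IsOpen U ∧ s = lminus M U} ↔
      ∀ F : ↥M, @closure _ O {F} = {G : ↥M | (G : Set X) ⊆ (F : Set X)} := by
  letI := O
  have hO' : O = TopologicalSpace.generateFrom
      {s : Set ↥M | @IsOpen _ O s ∧ ∃ A : Set X, s = lminus M A} := hO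
  constructor
  · intro hOV F
    ext G
    simp only [Set.mem_setOf_eq]
    constructor
    · intro hG
      intro x hx
      by_contra hxF
      have hFc : IsClosed (F : Set X) := (hM.le F.2).1
      have hopen : IsOpen (lminus M ((F : Set X)ᶜ)) := by
        rw [show (IsOpen : Set ↥M → Prop) = @IsOpen _ O from rfl, hOV]
        exact TopologicalSpace.isOpen_generateFrom_of_mem
          ⟨(F : Set X)ᶜ, hFc.isOpen_compl, rfl⟩
      obtain ⟨H, hHo, hHF⟩ := mem_closure_iff.mp hG _ hopen ⟨x, hx, hxF⟩
      rw [Set.mem_singleton_iff] at hHF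
      subst hHF
      obtain ⟨y, hy1, hy2⟩ := hHo
      exact hy2 hy1
    · intro hGF
      have key : ∀ o : Set ↥M,
          TopologicalSpace.GenerateOpen
            {s : Set ↥M | ∃ U : Set X, IsOpen U ∧ s = lminus M U} o →
          G ∈ o → F ∈ o := by
        intro o ho
        induction ho with
        | basic s hs =>
          intro hGs
          obtain ⟨U, hU, rfl⟩ := hs
          obtain ⟨x, hxG, hxU⟩ := hGs
          exact ⟨x, hGF hxG, hxU⟩
        | univ => intro _; trivial
        | inter s t _ _ ihs iht => intro h; exact ⟨ihs h.1, iht h.2⟩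
        | sUnion S _ ih =>
          rintro ⟨s, hsS, hGs⟩
          exact ⟨s, hsS, ih s hsS hGs⟩
      refine mem_closure_iff.mpr ?_
      intro o ho hGo
      rw [show (IsOpen : Set ↥M → Prop) = @IsOpen _ O from rfl, hOV] at ho
      exact ⟨F, key o ho hGo, rfl⟩
  · intro hcl
    apply le_antisymm
    · -- O ≤ V : every V-subbasic U⁻ is O-open
      rw [TopologicalSpace.le_generateFrom_iff_subset_isOpen]
      rintro s ⟨U, hU, rfl⟩
      rcases eq_or_ne Uᶜ ∅ with h | h
      · have hUuniv : U = Set.univ := by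
          rw [← Set.compl_empty, ← h, compl_compl]
        have heq : lminus M U = Set.univ := by
          ext G
          simp only [Set.mem_univ, iff_true, lminus, Set.mem_setOf_eq, hUuniv,
            Set.inter_univ]
          exact (hM.le G.2).2
        rw [heq]
        exact isOpen_univ
      · have hUc : Uᶜ ∈ M := by
          rw [hM]; exact ⟨hU.isClosed_compl, Set.nonempty_iff_ne_empty.mpr h⟩
        have hclosed : IsClosed {G : ↥M | (G : Set X) ⊆ Uᶜ} := by
          have h2 := hcl ⟨Uᶜ, hUc⟩
          simp only at h2
          rw [← h2]
          exact isClosed_closure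
        have heq : lminus M U = {G : ↥M | (G : Set X) ⊆ Uᶜ}ᶜ := by
          ext G
          simp only [lminus, Set.mem_setOf_eq, Set.mem_compl_iff]
          constructor
          · rintro ⟨x, hxG, hxU⟩ hsub
            exact (hsub hxG) hxU
          · intro hns
            rw [Set.not_subset] at hns
            obtain ⟨x, hxG, hxU⟩ := hns
            exact ⟨x, hxG, not_not.mp hxU⟩
        rw [heq]
        exact hclosed.isOpen_compl
    · -- V ≤ O
      conv_rhs => rw [hO']
      rw [TopologicalSpace.le_generateFrom_iff_subset_isOpen]
      rintro s ⟨hs, A, rfl⟩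
      have hA : IsOpen A := by
        rw [← hTO]
        exact TopologicalSpace.isOpen_generateFrom_of_mem hs
      exact TopologicalSpace.isOpen_generateFrom_of_mem ⟨A, hA, rfl⟩
end

section
/- Let X be a set, M a natural family of nonempty subsets of X (i.e., {x} ∈ M for all x ∈ X), and O a lower-Vietoris-type topology on M. Then (M,O) is a T₁-space if and only if M = {{x} : x ∈ X} and (X, T_O) is a T₁-space. -/
theorem stmt_5 {X : Type*} (M : Set (Set X)) (hM : ∀ m ∈ M, m.Nonempty)
    (hnat : ∀ x : X, {x} ∈ M)
    (O : TopologicalSpace ↥M) (hO : IsLowerVietorisType M O) :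
    @T1Space ↥M O ↔
      (M = {s : Set X | ∃ x : X, s = {x}} ∧
        @T1Space X (TopologicalSpace.generateFrom
          {A : Set X | @IsOpen _ O (lminus M A)})) := by
  set S : Set (Set ↥M) := {s : Set ↥M | @IsOpen _ O s ∧ ∃ A : Set X, s = lminus M A} with hS
  set P : Set (Set X) := {A : Set X | @IsOpen _ O (lminus M A)} with hP
  have hO' : O = TopologicalSpace.generateFrom S := hO
  have hopen : ∀ U : Set ↥M, @IsOpen _ O U ↔ TopologicalSpace.GenerateOpen S U := by
    intro U; rw [hO']; exact Iff.rfl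
  set e : X → ↥M := fun x => ⟨{x}, hnat x⟩ with he
  have hepre : ∀ A : Set X, e ⁻¹' (lminus M A) = A := by
    intro A; ext x
    simp [lminus, e, Set.singleton_inter_nonempty]
  constructor
  · intro h1
    -- key: every O-open set containing a singleton of a point of m contains m
    have key : ∀ U : Set ↥M, TopologicalSpace.GenerateOpen S U →
        ∀ (m : ↥M) (x : X), x ∈ (m : Set X) → e x ∈ U → m ∈ U := by
      intro U hU
      induction hU with
      | basic s hs =>
        intro m x hx hxU
        obtain ⟨-, A, rfl⟩ := hs
        obtain ⟨z, hz1, hz2⟩ := hxU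
        rw [Set.mem_singleton_iff] at hz1
        subst hz1
        exact ⟨z, hx, hz2⟩
      | univ => intro m x _ _; trivial
      | inter s t _ _ ihs iht =>
        intro m x hx hm; exact ⟨ihs m x hx hm.1, iht m x hx hm.2⟩
      | sUnion T _ ih =>
        intro m x hx hm
        obtain ⟨t, ht, hmt⟩ := hm
        exact ⟨t, ht, ih t ht m x hx hmt⟩
    have hMeq : M = {s : Set X | ∃ x : X, s = {x}} := by
      ext s
      constructor
      · intro hs
        obtain ⟨x, hx⟩ := hM s hs
        refine ⟨x, ?_⟩
        ext y
        simp only [Set.mem_singleton_iff]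
        constructor
        · intro hy
          by_contra hne
          have hneq : e y ≠ (⟨s, hs⟩ : ↥M) := by
            intro h
            have : ({y} : Set X) = s := congrArg Subtype.val h
            rw [← this] at hx
            exact hne (Set.mem_singleton_iff.mp hx).symm
          letI := O
          obtain ⟨U, hUo, hyU, hsU⟩ := t1Space_iff_exists_open.mp h1 hneq
          exact hsU (key U ((hopen U).mp hUo) ⟨s, hs⟩ y hy hyU)
        · rintro rfl; exact hx
      · rintro ⟨x, rfl⟩; exact hnat x
    refine ⟨hMeq, ?_⟩
    -- preimages under e of O-open sets are T_O-open
    have pre : ∀ U : Set ↥M, TopologicalSpace.GenerateOpen S U →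
        @IsOpen X (TopologicalSpace.generateFrom P) (e ⁻¹' U) := by
      intro U hU
      induction hU with
      | basic s hs =>
        obtain ⟨hso, A, rfl⟩ := hs
        rw [hepre A]
        exact TopologicalSpace.GenerateOpen.basic A hso
      | univ => exact @isOpen_univ _ (TopologicalSpace.generateFrom P)
      | inter s t _ _ ihs iht =>
        exact @IsOpen.inter _ (TopologicalSpace.generateFrom P) _ _ ihs iht
      | sUnion T _ ih =>
        rw [Set.preimage_sUnion]
        exact @isOpen_biUnion _ _ (TopologicalSpace.generateFrom P) _ _ ih
    letI := TopologicalSpace.generateFrom P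
    rw [t1Space_iff_exists_open]
    intro x y hxy
    have hne : e x ≠ e y := by
      intro h
      exact hxy (Set.singleton_eq_singleton_iff.mp (congrArg Subtype.val h))
    obtain ⟨U, hUo, hxU, hyU⟩ := @t1Space_iff_exists_open _ O |>.mp h1 hne
    exact ⟨e ⁻¹' U, pre U ((hopen U).mp hUo), hxU, hyU⟩
  · rintro ⟨hMeq, h2⟩
    have hsing : ∀ m : ↥M, ∃ x : X, (m : Set X) = {x} := by
      intro m
      exact (Set.ext_iff.mp hMeq (m : Set X)).mp m.2
    -- lminus of a T_O-open set is O-open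
    have im : ∀ V : Set X, TopologicalSpace.GenerateOpen P V →
        @IsOpen _ O (lminus M V) := by
      intro V hV
      induction hV with
      | basic A hA => exact hA
      | univ =>
        have : lminus M Set.univ = Set.univ := by
          ext m
          simpa [lminus] using hM m m.2
        rw [this]
        exact @isOpen_univ _ O
      | inter s t _ _ ihs iht =>
        have : lminus M (s ∩ t) = lminus M s ∩ lminus M t := by
          ext m
          obtain ⟨x, hx⟩ := hsing m
          simp [lminus, hx, Set.singleton_inter_nonempty]
        rw [this]
        exact @IsOpen.inter _ O _ _ ihs iht
      | sUnion T _ ih =>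
        have : lminus M (⋃₀ T) = ⋃ t ∈ T, lminus M t := by
          ext m
          simp only [lminus, Set.mem_setOf_eq, Set.mem_iUnion, Set.sUnion_eq_iUnion,
            Set.inter_iUnion, Set.nonempty_iUnion]
          constructor
          · rintro ⟨⟨t, ht⟩, h⟩; exact ⟨t, ht, h⟩
          · rintro ⟨t, ht, h⟩; exact ⟨⟨t, ht⟩, h⟩
        rw [this]
        exact @isOpen_biUnion _ _ O _ _ ih
    letI := O
    rw [t1Space_iff_exists_open]
    intro m n hmn
    obtain ⟨x, hx⟩ := hsing m
    obtain ⟨y, hy⟩ := hsing n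
    have hxy : x ≠ y := by
      rintro rfl
      exact hmn (Subtype.ext (hx.trans hy.symm))
    obtain ⟨V, hVo, hxV, hyV⟩ := (@t1Space_iff_exists_open X (TopologicalSpace.generateFrom P)).mp h2 hxy
    refine ⟨lminus M V, im V hVo, ?_, ?_⟩
    · show ((m : Set X) ∩ V).Nonempty
      rw [hx, Set.singleton_inter_nonempty]
      exact hxV
    · intro h
      change lminus M V n at h
      have : ((n : Set X) ∩ V).Nonempty := h
      rw [hy, Set.singleton_inter_nonempty] at this
      exact hyV this
end

section
/- Let X be a set, M a natural family of nonempty subsets of X, U_{α,i} ⊆ X nonempty for α ∈ A, i = 1,…,n_α, and U ⊆ X. Then U⁻_M = ⋃_{α∈A} ⋂_{i=1}^{n_α} (U_{α,i})⁻_M if and only if (1) U = ⋃_{α∈A} ⋂_{i=1}^{n_α} U_{α,i} and (2) every m ∈ M which meets U_{α,i} for some α and all i = 1,…,n_α also meets U. -/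
theorem stmt_6 {X : Type*} (M : Set (Set X)) (hM : ∀ m ∈ M, m.Nonempty)
    (hnat : ∀ x : X, {x} ∈ M)
    {A : Type*} (n : A → ℕ) (hn : ∀ α, 0 < n α)
    (Us : (α : A) → Fin (n α) → Set X) (hUs : ∀ α i, (Us α i).Nonempty)
    (U : Set X) :
    lminus M U = ⋃ α : A, ⋂ i : Fin (n α), lminus M (Us α i) ↔
      (U = ⋃ α : A, ⋂ i : Fin (n α), Us α i ∧
        ∀ m ∈ M, (∃ α : A, ∀ i : Fin (n α), (m ∩ Us α i).Nonempty) →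
          (m ∩ U).Nonempty) := by
  constructor
  · intro h
    have hmem : ∀ x : X, (⟨{x}, hnat x⟩ : ↥M) ∈ lminus M U ↔
        (⟨{x}, hnat x⟩ : ↥M) ∈ ⋃ α : A, ⋂ i : Fin (n α), lminus M (Us α i) := by
      intro x; rw [h]
    constructor
    · ext x
      have := hmem x
      simp only [lminus, Set.mem_setOf_eq, Set.mem_iUnion, Set.mem_iInter,
        Set.singleton_inter_nonempty] at this ⊢
      exact this
    · intro m hm ⟨α, hα⟩
      have : (⟨m, hm⟩ : ↥M) ∈ lminus M U := by
        rw [h]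
        simp only [Set.mem_iUnion, Set.mem_iInter]
        exact ⟨α, fun i => hα i⟩
      exact this
  · rintro ⟨hU, h2⟩
    ext m
    simp only [lminus, Set.mem_setOf_eq, Set.mem_iUnion, Set.mem_iInter]
    constructor
    · rintro ⟨x, hxm, hxU⟩
      rw [hU] at hxU
      simp only [Set.mem_iUnion, Set.mem_iInter] at hxU
      obtain ⟨α, hα⟩ := hxU
      exact ⟨α, fun i => ⟨x, hxm, hα i⟩⟩
    · rintro ⟨α, hα⟩
      exact h2 m m.2 ⟨α, hα⟩
end

section
/- Let X be a set, M a natural family of nonempty subsets of X, and O a lower-Vietoris-type topology on M. Then P_O = {A ⊆ X : A⁻_M ∈ O} is an M⁻-closed family. -/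
def MCovered {X : Type*} (M 𝒰 : Set (Set X)) (U : Set X) : Prop :=
  ∃ (A : Type) (n : A → ℕ) (_ : ∀ α, 0 < n α) (f : (α : A) → Fin (n α) → Set X),
    (∀ α i, f α i ∈ 𝒰) ∧
    U = ⋃ α : A, ⋂ i : Fin (n α), f α i ∧
    ∀ m ∈ M, (∃ α : A, ∀ i : Fin (n α), (m ∩ f α i).Nonempty) → (m ∩ U).Nonempty

def MClosedFamily {X : Type*} (M 𝒰 : Set (Set X)) : Prop :=
  ∀ U : Set X, MCovered M 𝒰 U → U ∈ 𝒰

theorem stmt_8 {X : Type} (M : Set (Set X)) (hM : ∀ m ∈ M, m.Nonempty)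
    (hnat : ∀ x : X, {x} ∈ M)
    (O : TopologicalSpace ↥M) (hO : IsLowerVietorisType M O) :
    MClosedFamily M {A : Set X | @IsOpen _ O (lminus M A)} := by
  intro U hU
  obtain ⟨A, n, hn, f, hf, hUeq, hcond⟩ := hU
  have key : lminus M U = ⋃ α : A, ⋂ i : Fin (n α), lminus M (f α i) := by
    ext m
    constructor
    · rintro ⟨x, hxm, hxU⟩
      rw [hUeq] at hxU
      obtain ⟨_, ⟨α, rfl⟩, hx⟩ := hxU
      simp only [Set.mem_iInter] at hx
      exact Set.mem_iUnion.mpr ⟨α, Set.mem_iInter.mpr fun i => ⟨x, hxm, hx i⟩⟩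
    · intro hm
      obtain ⟨α, hα⟩ := Set.mem_iUnion.mp hm
      exact hcond m m.2 ⟨α, fun i => Set.mem_iInter.mp hα i⟩
  show IsOpen (lminus M U)
  rw [key]
  exact isOpen_iUnion fun α => isOpen_iInter_of_finite fun i => hf α i
end

section
/- Let M be a family of nonempty subsets of ℝ containing all sets of cardinality at most 2. Then the family U = {(-∞,β), (α,∞), (-∞,β) ∪ (α,∞) : α, β ∈ ℝ ∪ {±∞}} is M⁻-closed, and the lower-Vietoris-type topology on M generated by U differs from the lower Vietoris topology on M generated by the standard topology on ℝ. -/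
/-- The family `{(-∞,β), (α,∞), (-∞,β) ∪ (α,∞) : α, β ∈ ℝ ∪ {±∞}}`: every member
is of the form `(-∞,b) ∪ (a,∞)` for extended reals `a, b` (taking `b = -∞` or
`a = +∞` yields the one-sided rays). -/
def rayFamily : Set (Set ℝ) :=
  {s : Set ℝ | ∃ a b : EReal,
    s = {x : ℝ | (x : EReal) < b} ∪ {x : ℝ | a < (x : EReal)}}

lemma ray_isOpen (a b : EReal) :
    IsOpen ({x : ℝ | (x : EReal) < b} ∪ {x : ℝ | a < (x : EReal)}) := by
  apply IsOpen.union
  · induction b using EReal.rec with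
    | bot => simp
    | coe r =>
        have : {x : ℝ | (x : EReal) < (r : EReal)} = Set.Iio r := by
          ext x; simp [EReal.coe_lt_coe_iff]
        rw [this]; exact isOpen_Iio
    | top =>
        have : {x : ℝ | (x : EReal) < ⊤} = Set.univ := by
          ext x; simp [EReal.coe_lt_top]
        rw [this]; exact isOpen_univ
  · induction a using EReal.rec with
    | bot =>
        have : {x : ℝ | (⊥ : EReal) < (x : EReal)} = Set.univ := by
          ext x; simp [EReal.bot_lt_coe]
        rw [this]; exact isOpen_univ
    | coe r =>
        have : {x : ℝ | (r : EReal) < (x : EReal)} = Set.Ioi r := by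
          ext x; simp [EReal.coe_lt_coe_iff]
        rw [this]; exact isOpen_Ioi
    | top => simp

theorem stmt_10 (M : Set (Set ℝ)) (hM : ∀ m ∈ M, m.Nonempty)
    (hFin2 : ∀ s : Set ℝ, s.Nonempty → s.Finite → s.ncard ≤ 2 → s ∈ M) :
    MClosedFamily M rayFamily ∧
      TopologicalSpace.generateFrom {s : Set ↥M | ∃ A ∈ rayFamily, s = lminus M A} ≠
        TopologicalSpace.generateFrom
          {s : Set ↥M | ∃ A : Set ℝ, IsOpen A ∧ s = lminus M A} := by
  have hpair : ∀ y z : ℝ, ({y, z} : Set ℝ) ∈ M := by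
    intro y z
    refine hFin2 _ ⟨y, Set.mem_insert _ _⟩ (Set.toFinite _) ?_
    calc ({y, z} : Set ℝ).ncard ≤ ({z} : Set ℝ).ncard + 1 := Set.ncard_insert_le _ _
      _ ≤ 2 := by simp
  constructor
  · -- MClosedFamily
    intro U hU
    obtain ⟨A, n, npos, f, hf, hUeq, hcond⟩ := hU
    have hopen : IsOpen U := by
      rw [hUeq]
      apply isOpen_iUnion
      intro α
      apply isOpen_iInter_of_finite
      intro i
      obtain ⟨a, b, hab⟩ := hf α i
      rw [hab]; exact ray_isOpen a b
    have key : ∀ x ∈ U, (∀ y, y < x → y ∈ U) ∨ (∀ z, x < z → z ∈ U) := by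
      intro x hx
      by_contra h
      push_neg at h
      obtain ⟨⟨y, hyx, hyU⟩, ⟨z, hxz, hzU⟩⟩ := h
      rw [hUeq] at hx
      obtain ⟨α, hα⟩ := Set.mem_iUnion.mp hx
      have hne : (({y, z} : Set ℝ) ∩ U).Nonempty := by
        refine hcond _ (hpair y z) ⟨α, fun i => ?_⟩
        have hxi : x ∈ f α i := Set.mem_iInter.mp hα i
        obtain ⟨a, b, hab⟩ := hf α i
        rw [hab] at hxi ⊢
        rcases hxi with hxi | hxi
        · exact ⟨y, Set.mem_insert _ _, Or.inl (lt_trans (EReal.coe_lt_coe_iff.mpr hyx) hxi)⟩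
        · exact ⟨z, Set.mem_insert_of_mem _ rfl, Or.inr (lt_trans hxi (EReal.coe_lt_coe_iff.mpr hxz))⟩
      obtain ⟨w, hw1, hw2⟩ := hne
      rcases Set.mem_insert_iff.mp hw1 with rfl | hw1
      · exact hyU hw2
      · rw [Set.mem_singleton_iff] at hw1; subst hw1; exact hzU hw2
    set Aset : Set ℝ := {x | x ∈ U ∧ ∀ y, y < x → y ∈ U} with hAset
    set Bset : Set ℝ := {x | x ∈ U ∧ ∀ z, x < z → z ∈ U} with hBset
    refine ⟨sInf ((fun x : ℝ => (x : EReal)) '' Bset), sSup ((fun x : ℝ => (x : EReal)) '' Aset), ?_⟩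
    ext x
    simp only [Set.mem_union, Set.mem_setOf_eq]
    constructor
    · intro hx
      obtain ⟨ε, hε, hball⟩ := Metric.isOpen_iff.mp hopen x hx
      rcases key x hx with hL | hR
      · left
        have hx' : x + ε / 2 ∈ Aset := by
          constructor
          · apply hball
            rw [Metric.mem_ball, Real.dist_eq]
            rw [abs_lt]; constructor <;> linarith
          · intro y hy
            rcases lt_or_ge y x with h1 | h1
            · exact hL y h1
            · apply hball
              rw [Metric.mem_ball, Real.dist_eq, abs_lt]
              constructor <;> linarith
        calc (x : EReal) < ((x + ε / 2 : ℝ) : EReal) := EReal.coe_lt_coe_iff.mpr (by linarith)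
          _ ≤ _ := le_sSup (Set.mem_image_of_mem _ hx')
      · right
        have hx' : x - ε / 2 ∈ Bset := by
          constructor
          · apply hball
            rw [Metric.mem_ball, Real.dist_eq, abs_lt]
            constructor <;> linarith
          · intro z hz
            rcases lt_or_ge x z with h1 | h1
            · exact hR z h1
            · apply hball
              rw [Metric.mem_ball, Real.dist_eq, abs_lt]
              constructor <;> linarith
        calc sInf _ ≤ ((x - ε / 2 : ℝ) : EReal) := sInf_le (Set.mem_image_of_mem _ hx')
          _ < (x : EReal) := EReal.coe_lt_coe_iff.mpr (by linarith)
    · intro h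
      rcases h with h | h
      · obtain ⟨t, ht, hlt⟩ := lt_sSup_iff.mp h
        obtain ⟨x', hx', rfl⟩ := ht
        exact hx'.2 x (EReal.coe_lt_coe_iff.mp hlt)
      · obtain ⟨t, ht, hlt⟩ := sInf_lt_iff.mp h
        obtain ⟨x', hx', rfl⟩ := ht
        exact hx'.2 x (EReal.coe_lt_coe_iff.mp hlt)
  · -- topologies differ
    intro heq
    have h12 : ({(1 : ℝ) / 2} : Set ℝ) ∈ M :=
      hFin2 _ ⟨_, rfl⟩ (Set.finite_singleton _) (by simp)
    set m₀ : ↥M := ⟨{(1 : ℝ) / 2}, h12⟩ with hm₀def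
    set m' : ↥M := ⟨({-1, 2} : Set ℝ), hpair (-1) 2⟩ with hm'def
    set S1 : Set (Set ↥M) := {s : Set ↥M | ∃ A ∈ rayFamily, s = lminus M A} with hS1
    letI t1 : TopologicalSpace ↥M := TopologicalSpace.generateFrom S1
    have hO : IsOpen (lminus M (Set.Ioo 0 1)) := by
      show (TopologicalSpace.generateFrom S1).IsOpen _
      rw [heq]
      exact TopologicalSpace.GenerateOpen.basic _ ⟨Set.Ioo 0 1, isOpen_Ioo, rfl⟩
    have hb : TopologicalSpace.IsTopologicalBasis
        ((fun g : Set (Set ↥M) => ⋂₀ g) '' {g : Set (Set ↥M) | g.Finite ∧ g ⊆ S1}) :=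
      TopologicalSpace.isTopologicalBasis_of_subbasis rfl
    have hm0 : m₀ ∈ lminus M (Set.Ioo 0 1) :=
      ⟨1 / 2, rfl, by norm_num⟩
    obtain ⟨V, hVmem, hm0V, hVsub⟩ := hb.isOpen_iff.mp hO m₀ hm0
    obtain ⟨F, ⟨hFfin, hFsub⟩, rfl⟩ := hVmem
    have hm' : m' ∈ ⋂₀ F := by
      intro s hs
      obtain ⟨Aset, ⟨a, b, rfl⟩, rfl⟩ := hFsub hs
      have h0 : (1 / 2 : ℝ) ∈ {x : ℝ | (x : EReal) < b} ∪ {x : ℝ | a < (x : EReal)} := by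
        obtain ⟨w, hw1, hw2⟩ := Set.mem_sInter.mp hm0V _ hs
        rw [Set.mem_singleton_iff] at hw1
        subst hw1
        exact hw2
      rcases h0 with h0 | h0
      · exact ⟨-1, Set.mem_insert _ _,
          Or.inl (lt_trans (EReal.coe_lt_coe_iff.mpr (by norm_num)) h0)⟩
      · exact ⟨2, Set.mem_insert_of_mem _ rfl,
          Or.inr (lt_trans h0 (EReal.coe_lt_coe_iff.mpr (by norm_num)))⟩
    have hfin : m' ∈ lminus M (Set.Ioo 0 1) := hVsub hm'
    obtain ⟨w, hw1, hw2⟩ := hfin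
    rcases Set.mem_insert_iff.mp hw1 with rfl | hw1
    · exact absurd hw2.1 (by norm_num)
    · rw [Set.mem_singleton_iff] at hw1; subst hw1
      exact absurd hw2.2 (by norm_num)
end

section
/- Let X be a set, M a natural family of nonempty subsets of X, and O a lower-Vietoris-type topology on M. Then the map Φ : (X, T_O) → (M, O), Φ(x) = {x}, is a topological embedding; moreover if (X, T_O) is Hausdorff then Φ(X) is closed in (M,O), and if additionally |X| > 1 and X ∈ M then Φ(X) is nowhere dense in (M,O). -/
theorem stmt_12 {X : Type*} (M : Set (Set X)) (hM : ∀ m ∈ M, m.Nonempty)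
    (hnat : ∀ x : X, {x} ∈ M)
    (O : TopologicalSpace ↥M) (hO : IsLowerVietorisType M O)
    (tO : TopologicalSpace X)
    (htO : tO = TopologicalSpace.generateFrom {A : Set X | @IsOpen _ O (lminus M A)})
    (Φ : X → ↥M) (hΦ : ∀ x : X, Φ x = ⟨{x}, hnat x⟩) :
    @Topology.IsEmbedding X ↥M tO O Φ ∧
      (@T2Space X tO → @IsClosed ↥M O (Set.range Φ)) ∧
      (@T2Space X tO → Nontrivial X → Set.univ ∈ M →
        @IsNowhereDense ↥M O (Set.range Φ)) := by
  letI := O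
  set S : Set (Set ↥M) := {s : Set ↥M | @IsOpen _ O s ∧ ∃ A : Set X, s = lminus M A} with hS
  set G : Set (Set X) := {A : Set X | @IsOpen _ O (lminus M A)} with hG
  subst htO
  letI tX : TopologicalSpace X := TopologicalSpace.generateFrom G
  -- basic membership fact
  have hmem : ∀ (x : X) (A : Set X), Φ x ∈ lminus M A ↔ x ∈ A := by
    intro x A
    rw [hΦ]
    simp [lminus, Set.singleton_inter_nonempty]
  have hpre : ∀ A : Set X, Φ ⁻¹' lminus M A = A := by
    intro A; ext x; exact hmem x A
  -- injectivity
  have hinj : Function.Injective Φ := by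
    intro x y h
    rw [hΦ, hΦ, Subtype.mk.injEq] at h
    exact Set.singleton_eq_singleton_iff.mp h
  -- inducing
  have hind : tX = TopologicalSpace.induced Φ O := by
    refine le_antisymm ?_ (le_generateFrom ?_)
    · rw [hO, induced_generateFrom_eq]
      refine TopologicalSpace.generateFrom_anti ?_
      rintro _ ⟨s, ⟨hs, A, rfl⟩, rfl⟩
      rw [hpre]
      exact hs
    · intro A hA
      exact ⟨lminus M A, hA, hpre A⟩
  have hemb : @Topology.IsEmbedding X ↥M tX O Φ := ⟨⟨hind⟩, hinj⟩
  -- closedness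
  have hclosed : @T2Space X tX → IsClosed (Set.range Φ) := by
    intro hT2
    have hBX := TopologicalSpace.isTopologicalBasis_of_subbasis
      (rfl : tX = TopologicalSpace.generateFrom G)
    rw [← isOpen_compl_iff]
    rw [isOpen_iff_forall_mem_open]
    rintro ⟨m, hmM⟩ hm
    -- m has two distinct points
    obtain ⟨a, ha⟩ := hM m hmM
    have hb : ∃ b ∈ m, b ≠ a := by
      by_contra h
      push_neg at h
      apply hm
      refine ⟨a, ?_⟩
      rw [hΦ]
      congr 1
      ext y
      simp only [Set.mem_singleton_iff]
      exact ⟨fun hy => hy ▸ ha, fun hy => h y hy⟩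
    obtain ⟨b, hbm, hba⟩ := hb
    obtain ⟨U, V, hU, hV, haU, hbV, hUV⟩ := t2_separation hba.symm
    obtain ⟨_, ⟨f, ⟨hff, hfG⟩, rfl⟩, haf, hfU⟩ := hBX.exists_subset_of_mem_open haU hU
    obtain ⟨_, ⟨g, ⟨hgf, hgG⟩, rfl⟩, hbg, hgV⟩ := hBX.exists_subset_of_mem_open hbV hV
    refine ⟨(⋂ A ∈ f, lminus M A) ∩ (⋂ B ∈ g, lminus M B), ?_, ?_, ?_⟩
    · rintro n ⟨hn1, hn2⟩ ⟨x, rfl⟩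
      simp only [Set.mem_iInter] at hn1 hn2
      have hxU : x ∈ U := hfU (fun A hA => (hmem x A).mp (hn1 A hA))
      have hxV : x ∈ V := hgV (fun B hB => (hmem x B).mp (hn2 B hB))
      exact Set.disjoint_left.mp hUV hxU hxV
    · exact ((hff.isOpen_biInter (fun A hA => hfG hA)).inter
        (hgf.isOpen_biInter (fun B hB => hgG hB)))
    · constructor
      · simp only [Set.mem_iInter]
        exact fun A hA => ⟨a, ha, haf A hA⟩
      · simp only [Set.mem_iInter]
        exact fun B hB => ⟨b, hbm, hbg B hB⟩
  refine ⟨hemb, hclosed, ?_⟩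
  -- nowhere dense
  intro hT2 hnt huniv
  have hcl := hclosed hT2
  unfold IsNowhereDense
  rw [hcl.closure_eq]
  rw [Set.eq_empty_iff_forall_notMem]
  intro n hn
  obtain ⟨x, hx⟩ := interior_subset hn
  have hBM := TopologicalSpace.isTopologicalBasis_of_subbasis hO
  obtain ⟨_, ⟨f, ⟨hff, hfS⟩, rfl⟩, hxf, hfsub⟩ :=
    hBM.exists_subset_of_mem_open (hx ▸ hn) isOpen_interior
  have : (⟨Set.univ, huniv⟩ : ↥M) ∈ ⋂₀ f := by
    intro s hs
    obtain ⟨hso, A, rfl⟩ := hfS hs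
    obtain ⟨y, _, hyA⟩ := hxf (lminus M A) hs
    exact ⟨y, trivial, hyA⟩
  have := interior_subset (hfsub this)
  obtain ⟨z, hz⟩ := this
  obtain ⟨a, b, hab⟩ := hnt
  apply hab
  have hz' : ({z} : Set X) = Set.univ := by
    rw [hΦ, Subtype.mk.injEq] at hz; exact hz
  have ha : a ∈ ({z} : Set X) := hz' ▸ Set.mem_univ a
  have hb : b ∈ ({z} : Set X) := hz' ▸ Set.mem_univ b
  rw [Set.mem_singleton_iff] at ha hb
  rw [ha, hb]
end

section
/- Let X be a set, M a family of nonempty subsets of X containing all nonempty finite subsets of X, and O a lower-Vietoris-type topology on M. Then Fin(X), the set of nonempty finite subsets of X, is dense in (M, O). -/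
theorem stmt_13 {X : Type*} (M : Set (Set X)) (hM : ∀ m ∈ M, m.Nonempty)
    (hFin : ∀ s : Set X, s.Nonempty → s.Finite → s ∈ M)
    (O : TopologicalSpace ↥M) (hO : IsLowerVietorisType M O) :
    @Dense ↥M O {m : ↥M | (m : Set X).Finite} := by
  letI := O
  rw [dense_iff_inter_open]
  intro U hU ⟨m, hm⟩
  unfold IsLowerVietorisType at hO
  rw [hO] at hU
  -- key claim by induction on GenerateOpen
  have key : ∀ U : Set ↥M, TopologicalSpace.GenerateOpen
      {s : Set ↥M | IsOpen s ∧ ∃ A : Set X, s = lminus M A} U →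
      ∀ m : ↥M, m ∈ U → ∃ F : Set X, F.Finite ∧ F.Nonempty ∧ F ⊆ (m : Set X) ∧
        ∀ m' : ↥M, F ⊆ (m' : Set X) → m' ∈ U := by
    intro U hU
    induction hU with
    | basic s hs =>
      intro m hm
      obtain ⟨-, A, rfl⟩ := hs
      obtain ⟨x, hxm, hxA⟩ := hm
      exact ⟨{x}, Set.finite_singleton x, Set.singleton_nonempty x,
        Set.singleton_subset_iff.mpr hxm,
        fun m' hm' => ⟨x, hm' rfl, hxA⟩⟩
    | univ =>
      intro m _
      obtain ⟨x, hx⟩ := hM m m.2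
      exact ⟨{x}, Set.finite_singleton x, Set.singleton_nonempty x,
        Set.singleton_subset_iff.mpr hx, fun _ _ => trivial⟩
    | inter s t _ _ ihs iht =>
      intro m hm
      obtain ⟨F₁, hF₁f, hF₁n, hF₁s, hF₁⟩ := ihs m hm.1
      obtain ⟨F₂, hF₂f, hF₂n, hF₂s, hF₂⟩ := iht m hm.2
      exact ⟨F₁ ∪ F₂, hF₁f.union hF₂f, hF₁n.mono Set.subset_union_left,
        Set.union_subset hF₁s hF₂s,
        fun m' h => ⟨hF₁ m' (Set.subset_union_left.trans h),
          hF₂ m' (Set.subset_union_right.trans h)⟩⟩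
    | sUnion S _ ih =>
      intro m hm
      obtain ⟨t, htS, hmt⟩ := hm
      obtain ⟨F, hFf, hFn, hFs, hF⟩ := ih t htS m hmt
      exact ⟨F, hFf, hFn, hFs, fun m' h => ⟨t, htS, hF m' h⟩⟩
  obtain ⟨F, hFf, hFn, _, hF⟩ := key U hU m hm
  refine ⟨⟨F, hFin F hFn hFf⟩, hF _ le_rfl, hFf⟩
end

section
/- Let (X,T), (X',T') be spaces, f : X → X', P a subbase for T, P' a subbase for T' with f⁻¹(P') ⊆ P, M a family of nonempty subsets of X, M' = CL(X'). Then the map 2^f : (M, O_P) → (M', O_{P'}), C ↦ closure of f(C) in X', is continuous, where O_P (resp. O_{P'}) is the topology with subbase {U⁻_M : U ∈ P} (resp. {U⁻_{M'} : U ∈ P'}). -/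
theorem stmt_14 {X X' : Type*} [T : TopologicalSpace X] [T' : TopologicalSpace X']
    (P : Set (Set X)) (hP : T = TopologicalSpace.generateFrom P) (hPcov : ⋃₀ P = Set.univ)
    (P' : Set (Set X')) (hP' : T' = TopologicalSpace.generateFrom P')
    (hP'cov : ⋃₀ P' = Set.univ)
    (f : X → X') (hf : ∀ U ∈ P', f ⁻¹' U ∈ P)
    (M : Set (Set X)) (hM : ∀ m ∈ M, m.Nonempty)
    (M' : Set (Set X')) (hM' : M' = {F : Set X' | IsClosed F ∧ F.Nonempty}) :
    @Continuous ↥M ↥M'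
      (TopologicalSpace.generateFrom {s : Set ↥M | ∃ U ∈ P, s = lminus M U})
      (TopologicalSpace.generateFrom {s : Set ↥M' | ∃ U ∈ P', s = lminus M' U})
      (fun C : ↥M => (⟨closure (f '' (C : Set X)),
        hM' ▸ ⟨isClosed_closure, ((hM C C.2).image f).closure⟩⟩ : ↥M')) := by
  apply continuous_generateFrom_iff.mpr
  rintro s ⟨U, hU, rfl⟩
  have hUopen : IsOpen U := by
    rw [hP']; exact TopologicalSpace.GenerateOpen.basic U hU
  have key : (fun C : ↥M => (⟨closure (f '' (C : Set X)),
      hM' ▸ ⟨isClosed_closure, ((hM C C.2).image f).closure⟩⟩ : ↥M')) ⁻¹' lminus M' U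
      = lminus M (f ⁻¹' U) := by
    ext C
    simp only [lminus, Set.mem_preimage, Set.mem_setOf_eq]
    constructor
    · rintro ⟨x, hxc, hxU⟩
      rcases mem_closure_iff.mp hxc U hUopen hxU with ⟨y, hyU, z, hzC, rfl⟩
      exact ⟨z, hzC, hyU⟩
    · rintro ⟨z, hzC, hzU⟩
      exact ⟨f z, subset_closure ⟨z, hzC, rfl⟩, hzU⟩
  rw [key]
  exact TopologicalSpace.GenerateOpen.basic _ ⟨f ⁻¹' U, hf U hU, rfl⟩
end

section
/- Let (X,T) be a space, P a subbase for T with X ∈ P, O = O_P^{CL(X)} the lower-Vietoris-type topology on CL(X) with subbase {U⁻ : U ∈ P}. For A ⊆ X let P_A = {U ∩ A : U ∈ P} and O_A the topology on CL(A) with subbase {V⁻ : V ∈ P_A}. Then the map i_{A,X} : (CL(A), O_A) → (CL(X), O), F ↦ closure of F in X, is a topological embedding. -/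
theorem stmt_16 {X : Type*} [T : TopologicalSpace X]
    (P : Set (Set X)) (hP : T = TopologicalSpace.generateFrom P)
    (hXP : Set.univ ∈ P) (A : Set X)
    (MX : Set (Set X)) (hMX : MX = {F : Set X | IsClosed F ∧ F.Nonempty})
    (MA : Set (Set ↥A)) (hMA : MA = {F : Set ↥A | IsClosed F ∧ F.Nonempty}) :
    @Topology.IsEmbedding ↥MA ↥MX
      (TopologicalSpace.generateFrom
        {s : Set ↥MA | ∃ U ∈ P, s = lminus MA ((Subtype.val) ⁻¹' U)})
      (TopologicalSpace.generateFrom {s : Set ↥MX | ∃ U ∈ P, s = lminus MX U})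
      (fun F : ↥MA => (⟨closure (Subtype.val '' (F : Set ↥A)),
        hMX ▸ ⟨isClosed_closure,
          ((hMA ▸ F.2 : IsClosed (F : Set ↥A) ∧ (F : Set ↥A).Nonempty)).2.image
            Subtype.val |>.closure⟩⟩ : ↥MX)) := by
  subst hMX hMA
  set MA' := {F : Set ↥A | IsClosed F ∧ F.Nonempty} with hMA'
  set MX' := {F : Set X | IsClosed F ∧ F.Nonempty} with hMX'
  set i : ↥MA' → ↥MX' := fun F : ↥MA' => (⟨closure (Subtype.val '' (F : Set ↥A)),
        ⟨isClosed_closure, (F.2.2.image Subtype.val).closure⟩⟩ : ↥MX') with hi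
  -- key: F is recovered from closure of its image
  have hrec : ∀ F : ↥MA', (F : Set ↥A) =
      Subtype.val ⁻¹' closure (Subtype.val '' (F : Set ↥A)) := by
    intro F
    rw [← Topology.IsInducing.subtypeVal.closure_eq_preimage_closure_image,
      F.2.1.closure_eq]
  -- key: for open U, closure meets U iff the set meets U
  have hkey : ∀ (U S : Set X), IsOpen U →
      ((closure S ∩ U).Nonempty ↔ (S ∩ U).Nonempty) := by
    intro U S h
    constructor
    · rintro ⟨x, hx⟩
      have := h.inter_closure ⟨hx.2, hx.1⟩
      rw [Set.inter_comm]
      exact closure_nonempty_iff.mp ⟨x, this⟩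
    · exact fun h => h.mono (Set.inter_subset_inter_left _ subset_closure)
  have hopen : ∀ U ∈ P, IsOpen U := by
    intro U hU
    rw [hP]
    exact TopologicalSpace.GenerateOpen.basic _ hU
  -- preimage of subbasic set
  have hpre : ∀ U ∈ P, i ⁻¹' (lminus _ U) = lminus _ (Subtype.val ⁻¹' U) := by
    intro U hU
    ext F
    simp only [lminus, Set.mem_preimage, Set.mem_setOf_eq, hi]
    rw [hkey U _ (hopen U hU), ← Set.image_inter_preimage,
      Set.image_nonempty]
  have heq : TopologicalSpace.generateFrom {s | ∃ U ∈ P, s = lminus MA' (Subtype.val ⁻¹' U)} =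
      TopologicalSpace.induced i
        (TopologicalSpace.generateFrom {s | ∃ U ∈ P, s = lminus MX' U}) := by
    rw [induced_generateFrom_eq]
    congr 1
    ext s
    constructor
    · rintro ⟨U, hU, rfl⟩
      exact ⟨lminus _ U, ⟨U, hU, rfl⟩, (hpre U hU).symm ▸ rfl⟩
    · rintro ⟨t, ⟨U, hU, rfl⟩, rfl⟩
      exact ⟨U, hU, hpre U hU⟩
  refine @Topology.IsEmbedding.mk _ _
      (TopologicalSpace.generateFrom {s | ∃ U ∈ P, s = lminus MA' (Subtype.val ⁻¹' U)})
      (TopologicalSpace.generateFrom {s | ∃ U ∈ P, s = lminus MX' U}) i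
      (@Topology.IsInducing.mk _ _
        (TopologicalSpace.generateFrom {s | ∃ U ∈ P, s = lminus MA' (Subtype.val ⁻¹' U)})
        (TopologicalSpace.generateFrom {s | ∃ U ∈ P, s = lminus MX' U}) i heq) ?_
  · intro F G h
    have h' : closure (Subtype.val '' (F : Set ↥A)) =
        closure (Subtype.val '' (G : Set ↥A)) := congrArg Subtype.val h
    exact Subtype.ext (by rw [hrec F, hrec G, h'])
end

section
/- Let X be a set, M a natural family of nonempty subsets of X, O a lower-Vietoris-type topology on M, and suppose (X, T_O) is Hausdorff. Then (X, T_O) is compact if and only if (M, O) is compact. -/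
open TopologicalSpace Set Filter

/-- Alexander subbase theorem. -/
lemma alexander_subbase {α : Type*} (S : Set (Set α))
    (h : ∀ C ⊆ S, ⋃₀ C = univ → ∃ F ⊆ C, F.Finite ∧ ⋃₀ F = univ) :
    @CompactSpace α (generateFrom S) := by
  letI := generateFrom S
  constructor
  rw [isCompact_iff_ultrafilter_le_nhds]
  intro f _
  by_contra hc
  push_neg at hc
  have key : ∀ x : α, ∃ s, s ∈ S ∧ x ∈ s ∧ s ∉ f := by
    intro x
    have hx := hc x (mem_univ x)
    rw [nhds_generateFrom, le_iInf_iff] at hx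
    push_neg at hx
    obtain ⟨u, hu⟩ := hx
    rw [le_iInf_iff] at hu
    push_neg at hu
    obtain ⟨⟨hxu, huS⟩, hle⟩ := hu
    exact ⟨u, huS, hxu, by rwa [le_principal_iff] at hle⟩
  choose s hsS hxs hsf using key
  obtain ⟨F, hFsub, hFfin, hFcov⟩ := h (range s)
    (range_subset_iff.mpr hsS)
    (eq_univ_of_forall fun x => ⟨s x, mem_range_self x, hxs x⟩)
  have hmem : (⋂ u ∈ F, uᶜ) ∈ f := by
    rw [← Ultrafilter.mem_coe, Filter.biInter_mem hFfin]
    intro u hu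
    obtain ⟨x, rfl⟩ := hFsub hu
    exact Ultrafilter.compl_mem_iff_notMem.mpr (hsf x)
  have hempty : (⋂ u ∈ F, uᶜ) = (∅ : Set α) := by
    have : (⋂ u ∈ F, uᶜ) = (⋃₀ F)ᶜ := by
      rw [compl_sUnion]
      ext y; simp [sInter_eq_biInter]
    rw [this, hFcov, compl_univ]
  rw [hempty] at hmem
  exact f.neBot.ne (empty_mem_iff_bot.mp hmem)

theorem stmt_17 {X : Type*} (M : Set (Set X)) (hM : ∀ m ∈ M, m.Nonempty)
    (hnat : ∀ x : X, {x} ∈ M)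
    (O : TopologicalSpace ↥M) (hO : IsLowerVietorisType M O)
    (tO : TopologicalSpace X)
    (htO : tO = TopologicalSpace.generateFrom {A : Set X | @IsOpen _ O (lminus M A)})
    (hT2 : @T2Space X tO) :
    @CompactSpace X tO ↔ @CompactSpace ↥M O := by
  rw [IsLowerVietorisType] at hO
  constructor
  · -- X compact → M compact
    intro hX
    rw [hO]
    apply alexander_subbase
    intro C hC hcov
    -- choose for each element of C a set A with s = lminus M A
    have hch : ∀ u ∈ C, ∃ A : Set X, u = lminus M A ∧ @IsOpen _ tO A := by
      intro u hu
      obtain ⟨hop, A, rfl⟩ := hC hu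
      exact ⟨A, rfl, by rw [htO]; exact isOpen_generateFrom_of_mem hop⟩
    choose! A hA hAop using hch
    -- the A u, u ∈ C, cover X
    have hXcov : univ ⊆ ⋃ u ∈ C, A u := by
      intro x _
      have : (⟨{x}, hnat x⟩ : ↥M) ∈ ⋃₀ C := hcov ▸ mem_univ _
      obtain ⟨u, huC, hxu⟩ := this
      rw [hA u huC] at hxu
      obtain ⟨y, hy1, hy2⟩ := hxu
      rcases hy1 with rfl
      exact mem_biUnion huC hy2
    obtain ⟨F, hF⟩ := (@isCompact_univ X tO hX).elim_finite_subcover (fun u : C => A u)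
      (fun u => hAop u u.2) (by intro x hx; simpa using hXcov hx)
    refine ⟨(fun u : C => (u : Set ↥M)) '' ↑F, ?_, (F.finite_toSet.image _), ?_⟩
    · rintro _ ⟨u, _, rfl⟩; exact u.2
    · apply eq_univ_of_forall
      intro m
      obtain ⟨x, hxm⟩ := hM m m.2
      have : x ∈ ⋃ u ∈ F, A u := hF (mem_univ x)
      obtain ⟨u, huF, hxA⟩ := mem_iUnion₂.mp this
      refine ⟨u, ⟨u, huF, rfl⟩, ?_⟩
      rw [hA u u.2]
      exact ⟨x, hxm, hxA⟩
  · -- M compact → X compact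
    intro hMc
    rw [htO]
    apply alexander_subbase
    intro C hC hcov
    have hMcov : univ ⊆ ⋃ A : C, lminus M A := by
      rintro ⟨m, hm⟩ _
      obtain ⟨x, hxm⟩ := hM m hm
      have : x ∈ ⋃₀ C := hcov ▸ mem_univ x
      obtain ⟨A, hAC, hxA⟩ := this
      exact mem_iUnion.mpr ⟨⟨A, hAC⟩, ⟨x, hxm, hxA⟩⟩
    obtain ⟨F, hF⟩ := (@isCompact_univ _ O hMc).elim_finite_subcover
      (fun A : C => lminus M A) (fun A => hC A.2) hMcov
    refine ⟨(fun A : C => (A : Set X)) '' ↑F, ?_, (F.finite_toSet.image _), ?_⟩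
    · rintro _ ⟨A, _, rfl⟩; exact A.2
    · apply eq_univ_of_forall
      intro x
      have : (⟨{x}, hnat x⟩ : ↥M) ∈ ⋃ A ∈ F, lminus M (A : Set X) := hF (mem_univ _)
      obtain ⟨A, hAF, hxA⟩ := mem_iUnion₂.mp this
      obtain ⟨y, hy1, hy2⟩ := hxA
      rcases hy1 with rfl
      exact ⟨A, ⟨A, hAF, rfl⟩, hy2⟩
end

section
/- Let (X,T) be a topological space, P a subbase for T, M a nonempty family of nonempty complements of members of P (i.e., M ⊆ {X \ U : U ∈ P}, ∅ ∉ M) with X ∈ M, such that M is closed under intersections of decreasing (chain) subfamilies. Then the space (M, O_P) has the fixed-point property: every continuous self-map Ψ of (M, O_P) has a fixed point, where O_P is the topology on M with subbase {U⁻_M : U ∈ P}, U⁻_M = {m ∈ M : m ∩ U ≠ ∅}. -/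
theorem stmt_18 {X : Type*} [T : TopologicalSpace X]
    (P : Set (Set X)) (hP : T = TopologicalSpace.generateFrom P)
    (M : Set (Set X)) (hMne : M.Nonempty)
    (hMP : M ⊆ {s : Set X | ∃ U ∈ P, s = Uᶜ})
    (hMempty : ∅ ∉ M) (hXM : Set.univ ∈ M)
    (hchain : ∀ 𝒞 : Set (Set X), 𝒞 ⊆ M → 𝒞.Nonempty →
      IsChain (· ⊆ ·) 𝒞 → ⋂₀ 𝒞 ∈ M)
    (O : TopologicalSpace ↥M)
    (hO : O = TopologicalSpace.generateFrom {s : Set ↥M | ∃ U ∈ P, s = lminus M U})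
    (Ψ : ↥M → ↥M) (hΨ : @Continuous ↥M ↥M O O Ψ) :
    ∃ K : ↥M, Ψ K = K := by
  clear hP
  clear T
  subst hO
  letI : TopologicalSpace ↥M :=
    TopologicalSpace.generateFrom {s : Set ↥M | ∃ U ∈ P, s = lminus M U}
  -- closure of a singleton is the down-set
  have hclos : ∀ m m' : ↥M, (m' : Set X) ⊆ (m : Set X) ↔
      m' ∈ closure {m} := by
    intro m m'
    rw [mem_closure_iff]
    constructor
    · intro hsub o ho hm'
      replace ho : TopologicalSpace.GenerateOpen
          {s : Set ↥M | ∃ U ∈ P, s = lminus M U} o := ho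
      have : m ∈ o := by
        induction ho with
        | basic s hs =>
            obtain ⟨U, hU, rfl⟩ := hs
            obtain ⟨x, hxm', hxU⟩ := hm'
            exact ⟨x, hsub hxm', hxU⟩
        | univ => trivial
        | inter s t hs ht ihs iht => exact ⟨ihs hm'.1, iht hm'.2⟩
        | sUnion S hS ih =>
            obtain ⟨t, htS, hmt⟩ := hm'
            exact ⟨t, htS, ih t htS hmt⟩
      exact ⟨m, this, rfl⟩
    · intro h
      by_contra hns
      obtain ⟨x, hxm', hxm⟩ := Set.not_subset.mp hns
      obtain ⟨U, hU, hmeq⟩ := hMP m.2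
      have ho : IsOpen (lminus M U) :=
        TopologicalSpace.GenerateOpen.basic _ ⟨U, hU, rfl⟩
      have hm' : m' ∈ lminus M U := by
        refine ⟨x, hxm', ?_⟩
        by_contra hxU
        exact hxm (hmeq ▸ hxU)
      obtain ⟨y, hy, rfl⟩ := h _ ho hm'
      obtain ⟨z, hzm, hzU⟩ := hy
      rw [hmeq] at hzm
      exact hzm hzU
  -- monotonicity of Ψ
  have hmono : ∀ a b : ↥M, (a : Set X) ⊆ (b : Set X) →
      (Ψ a : Set X) ⊆ (Ψ b : Set X) := by
    intro a b hab
    rw [hclos] at hab ⊢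
    exact map_mem_closure hΨ hab
      (fun z hz => by simp only [Set.mem_singleton_iff] at hz ⊢; rw [hz])
  -- Zorn's lemma on the family of Ψ-invariant members of M, ordered by ⊇
  set F : Set (Set X) := {K | ∃ hK : K ∈ M, (Ψ ⟨K, hK⟩ : Set X) ⊆ K} with hF
  have hzorn : ∃ K, Minimal (· ∈ F) K := by
    apply zorn_superset
    intro c hcF hc
    rcases c.eq_empty_or_nonempty with rfl | hcne
    · exact ⟨Set.univ, ⟨hXM, Set.subset_univ _⟩, by simp⟩
    · have hcM : c ⊆ M := fun s hs => (hcF hs).1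
      have hI : ⋂₀ c ∈ M := hchain c hcM hcne hc
      have hIsub : ∀ s ∈ c, ⋂₀ c ⊆ s := fun s hs => Set.sInter_subset_of_mem hs
      refine ⟨⋂₀ c, ⟨hI, ?_⟩, hIsub⟩
      intro x hx
      rw [Set.mem_sInter]
      intro s hs
      obtain ⟨hsM, hsΨ⟩ := hcF hs
      exact hsΨ (hmono ⟨⋂₀ c, hI⟩ ⟨s, hsM⟩ (hIsub s hs) hx)
  obtain ⟨K, ⟨hKM, hKΨ⟩, hmin⟩ := hzorn
  have hΨKF : (Ψ ⟨K, hKM⟩ : Set X) ∈ F := by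
    refine ⟨(Ψ ⟨K, hKM⟩).2, ?_⟩
    have : (⟨(Ψ ⟨K, hKM⟩ : Set X), (Ψ ⟨K, hKM⟩).2⟩ : ↥M) = Ψ ⟨K, hKM⟩ := rfl
    rw [this]
    exact hmono _ _ hKΨ
  have := hmin hΨKF hKΨ
  exact ⟨⟨K, hKM⟩, Subtype.ext (le_antisymm hKΨ this)⟩
end

section
/- Let X be a continuum (nonempty compact connected Hausdorff space) and f : X → X a continuous map. Then there exists a subcontinuum K of X (nonempty, compact, connected, closed in X) with f(K) = K. -/
open Set

/-- The intersection of a directed (by `⊇`) nonempty family of nonempty compact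
preconnected sets in a Hausdorff space is preconnected. -/
lemma sInter_preconnected_of_directed {X : Type*} [TopologicalSpace X] [T2Space X]
    {c : Set (Set X)} (hcne : c.Nonempty) (hdir : DirectedOn (· ⊇ ·) c)
    (hne : ∀ K ∈ c, (K : Set X).Nonempty) (hcomp : ∀ K ∈ c, IsCompact K)
    (hconn : ∀ K ∈ c, IsPreconnected K) : IsPreconnected (⋂₀ c) := by
  have hcl : ∀ K ∈ c, IsClosed K := fun K hK => (hcomp K hK).isClosed
  intro U V hU hV hsub hUne hVne
  by_contra hUV
  rw [not_nonempty_iff_eq_empty, eq_empty_iff_forall_notMem] at hUV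
  set C := ⋂₀ c with hC
  have key : ∀ x, x ∈ C → x ∈ U → x ∈ V → False := fun x h1 h2 h3 => hUV x ⟨h1, h2, h3⟩
  have hCc : IsCompact C := by
    obtain ⟨K₀, hK₀⟩ := hcne
    exact (hcomp K₀ hK₀).of_isClosed_subset (isClosed_sInter fun K hK => hcl K hK)
      (sInter_subset_of_mem hK₀)
  -- A := C ∩ U and B := C ∩ V are disjoint compact sets covering C
  have hA : IsCompact (C ∩ U) := by
    have : C ∩ U = C \ V := by
      ext x; constructor
      · rintro ⟨hx, hxU⟩
        refine ⟨hx, fun hxV => ?_⟩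
        exact key x hx hxU hxV
      · rintro ⟨hx, hxV⟩
        exact ⟨hx, (hsub hx).resolve_right hxV⟩
    rw [this]
    exact hCc.diff hV
  have hB : IsCompact (C ∩ V) := by
    have : C ∩ V = C \ U := by
      ext x; constructor
      · rintro ⟨hx, hxV⟩
        refine ⟨hx, fun hxU => ?_⟩
        exact key x hx hxU hxV
      · rintro ⟨hx, hxU⟩
        exact ⟨hx, (hsub hx).resolve_left hxU⟩
    rw [this]
    exact hCc.diff hU
  have hdisj : Disjoint (C ∩ U) (C ∩ V) := by
    rw [Set.disjoint_left]
    rintro x ⟨hx, hxU⟩ ⟨-, hxV⟩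
    exact key x hx hxU hxV
  obtain ⟨U', V', hU'o, hV'o, hAU', hBV', hU'ated⟩ :=
    SeparatedNhds.of_isCompact_isCompact hA hB hdisj
  -- each K in c must contain a point outside U' ∪ V'
  have hKout : ∀ K ∈ c, (K \ (U' ∪ V')).Nonempty := by
    intro K hK
    by_contra h
    rw [not_nonempty_iff_eq_empty, diff_eq_empty] at h
    have h1 : (K ∩ U').Nonempty := by
      obtain ⟨x, hxC, hxU⟩ := hUne
      exact ⟨x, sInter_subset_of_mem hK hxC, hAU' ⟨hxC, hxU⟩⟩
    have h2 : (K ∩ V').Nonempty := by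
      obtain ⟨x, hxC, hxV⟩ := hVne
      exact ⟨x, sInter_subset_of_mem hK hxC, hBV' ⟨hxC, hxV⟩⟩
    obtain ⟨x, -, hx⟩ := hconn K hK U' V' hU'o hV'o h h1 h2
    exact hU'ated.le_bot hx
  -- directed family of nonempty compact closed sets K \ (U' ∪ V')
  set W := U' ∪ V' with hW
  set c' : Set (Set X) := (fun K => K \ W) '' c with hc'
  have : Nonempty c' := by
    obtain ⟨K₀, hK₀⟩ := hcne
    exact ⟨⟨K₀ \ W, mem_image_of_mem _ hK₀⟩⟩
  have hInter : (⋂₀ c').Nonempty := by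
    apply IsCompact.nonempty_sInter_of_directed_nonempty_isCompact_isClosed
    · rintro _ ⟨K₁, hK₁, rfl⟩ _ ⟨K₂, hK₂, rfl⟩
      obtain ⟨K₃, hK₃, h31, h32⟩ := hdir K₁ hK₁ K₂ hK₂
      exact ⟨K₃ \ W, mem_image_of_mem _ hK₃, diff_subset_diff_left h31,
        diff_subset_diff_left h32⟩
    · rintro _ ⟨K, hK, rfl⟩; exact hKout K hK
    · rintro _ ⟨K, hK, rfl⟩; exact (hcomp K hK).diff (hU'o.union hV'o)
    · rintro _ ⟨K, hK, rfl⟩; exact (hcl K hK).sdiff (hU'o.union hV'o)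
  obtain ⟨x, hx⟩ := hInter
  have hxC : x ∈ C := by
    intro K hK
    have := hx (K \ W) (mem_image_of_mem _ hK)
    exact this.1
  have hxW : x ∉ W := by
    obtain ⟨K₀, hK₀⟩ := hcne
    exact (hx (K₀ \ W) (mem_image_of_mem _ hK₀)).2
  rcases hsub hxC with h | h
  · exact hxW (Or.inl (hAU' ⟨hxC, h⟩))
  · exact hxW (Or.inr (hBV' ⟨hxC, h⟩))

/-- For every continuous self-map of a continuum (nonempty compact connected
Hausdorff space) there is a subcontinuum `K` with `f(K) = K`. -/
theorem stmt_19 {X : Type*} [TopologicalSpace X] [CompactSpace X] [ConnectedSpace X]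
    [T2Space X] [Nonempty X] (f : X → X) (hf : Continuous f) :
    ∃ K : Set X, K.Nonempty ∧ IsCompact K ∧ IsConnected K ∧ IsClosed K ∧
      f '' K = K := by
  set S : Set (Set X) :=
    {K | K.Nonempty ∧ IsCompact K ∧ IsPreconnected K ∧ IsClosed K ∧ f '' K ⊆ K} with hS
  have huniv : (univ : Set X) ∈ S :=
    ⟨univ_nonempty, isCompact_univ, isPreconnected_univ, isClosed_univ, subset_univ _⟩
  have hzorn : ∀ c ⊆ S, IsChain (· ⊆ ·) c → c.Nonempty →
      ∃ lb ∈ S, ∀ s ∈ c, lb ⊆ s := by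
    intro c hcS hchain hcne
    refine ⟨⋂₀ c, ?_, fun s hs => sInter_subset_of_mem hs⟩
    have hdir : DirectedOn (· ⊇ ·) c := by
      intro a ha b hb
      rcases hchain.total ha hb with h | h
      · exact ⟨a, ha, le_refl _, h⟩
      · exact ⟨b, hb, h, le_refl _⟩
    have hne : ∀ K ∈ c, (K : Set X).Nonempty := fun K hK => (hcS hK).1
    have hcomp : ∀ K ∈ c, IsCompact K := fun K hK => (hcS hK).2.1
    have hconn : ∀ K ∈ c, IsPreconnected K := fun K hK => (hcS hK).2.2.1
    have hcl : ∀ K ∈ c, IsClosed K := fun K hK => (hcS hK).2.2.2.1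
    have : Nonempty c := hcne.to_subtype
    have hnon : (⋂₀ c).Nonempty :=
      IsCompact.nonempty_sInter_of_directed_nonempty_isCompact_isClosed hdir hne hcomp hcl
    have hclosed : IsClosed (⋂₀ c) := isClosed_sInter hcl
    refine ⟨hnon, hclosed.isCompact, sInter_preconnected_of_directed hcne hdir hne hcomp hconn,
      hclosed, ?_⟩
    intro y hy
    obtain ⟨x, hx, rfl⟩ := hy
    intro K hK
    exact (hcS hK).2.2.2.2 ⟨x, hx K hK, rfl⟩
  obtain ⟨K, -, hKS, hKmin⟩ := zorn_superset_nonempty S hzorn univ huniv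
  obtain ⟨hKne, hKc, hKpc, hKcl, hKf⟩ := hKS
  have hfK : f '' K ∈ S := by
    refine ⟨hKne.image f, hKc.image hf, hKpc.image f (hf.continuousOn), (hKc.image hf).isClosed,
      ?_⟩
    exact image_mono (f := f) hKf
  have : f '' K = K := le_antisymm hKf (hKmin hfK hKf)
  exact ⟨K, hKne, hKc, ⟨hKne, hKpc⟩, hKcl, this⟩
end
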